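/- arXiv:2012.04327 — 10 statements merged into one kernel-verified Lean document; each statement's English description precedes it below -/
import Mathlib

section
/- Let φ : ℝ^n → ℝ be differentiable with α-Lipschitz gradient (α ≥ 0), let δ ∈ (0,1), let ε̄ ≥ 0, let x ∈ [0,1]^n and let j be a coordinate with x_j < 1. If φ((1−δ)·x_j + δ, x_{−j}) ≤ φ(x) + ε̄, then ∂_j φ(x) ≤ ε̄ / (δ·(1−x_j)) + δ·(1−x_j)·α, where (t, x_{−j}) denotes the point obtained from x by replacing its j-th coordinate with t. -/
/-- If `φ` has `α`-Lipschitz gradient, `x ∈ [0,1]^n`, `x_j < 1`, and the multiplicative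
upward deviation `(1−δ)x_j + δ` improves `φ` by at most `ε̄`, then
`∂_j φ(x) ≤ ε̄/(δ(1−x_j)) + δ(1−x_j)α`. -/
theorem partial_upper_bound_of_deviation {n : ℕ}
    (φ : EuclideanSpace ℝ (Fin n) → ℝ) (α : ℝ) (hα : 0 ≤ α)
    (hdiff : Differentiable ℝ φ)
    (hlip : ∀ x y, ‖gradient φ x - gradient φ y‖ ≤ α * ‖x - y‖)
    (δ : ℝ) (hδ : δ ∈ Set.Ioo (0 : ℝ) 1) (ε' : ℝ) (hε' : 0 ≤ ε')
    (x : EuclideanSpace ℝ (Fin n)) (hx : ∀ j, x j ∈ Set.Icc (0 : ℝ) 1)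
    (j : Fin n) (hj : x j < 1)
    (h : φ (WithLp.toLp 2 (Function.update x j ((1 - δ) * x j + δ))) ≤ φ x + ε') :
    fderiv ℝ φ x (EuclideanSpace.single j 1) ≤ ε' / (δ * (1 - x j)) + δ * (1 - x j) * α := by
  obtain ⟨hδ0, hδ1⟩ := hδ
  set t : ℝ := δ * (1 - x j) with ht_def
  have ht : 0 < t := mul_pos hδ0 (by linarith)
  set e : EuclideanSpace ℝ (Fin n) := EuclideanSpace.single j (1 : ℝ) with he_def
  have hne : ‖e‖ = 1 := by simp [he_def]
  set y : EuclideanSpace ℝ (Fin n) := x + t • e with hy_def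
  have hyx : y - x = t • e := by simp [hy_def]
  have hyxnorm : ‖y - x‖ = t := by
    rw [hyx, norm_smul, hne]; simp [abs_of_pos ht]
  have hupd : WithLp.toLp 2 (Function.update x j ((1 - δ) * x j + δ)) = y := by
    ext i
    by_cases hij : i = j
    · subst hij
      simp [hy_def, he_def, Function.update_self, EuclideanSpace.single_apply]
      ring
    · simp [hy_def, he_def, Function.update_of_ne hij, EuclideanSpace.single_apply, hij]
  rw [hupd] at h
  -- Lipschitz bound on fderiv
  have hflip : ∀ z, ‖fderiv ℝ φ z - fderiv ℝ φ x‖ ≤ α * ‖z - x‖ := by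
    intro z
    have : fderiv ℝ φ z - fderiv ℝ φ x
        = InnerProductSpace.toDual ℝ _ (gradient φ z - gradient φ x) := by
      rw [map_sub]
      simp [gradient]
    rw [this, (InnerProductSpace.toDual ℝ _).norm_map]
    exact hlip z x
  -- auxiliary function
  set ψ : EuclideanSpace ℝ (Fin n) → ℝ := fun z => φ z - fderiv ℝ φ x z with hψ_def
  have hψdiff : Differentiable ℝ ψ := hdiff.sub (fderiv ℝ φ x).differentiable
  have hψd : ∀ z, fderiv ℝ ψ z = fderiv ℝ φ z - fderiv ℝ φ x := by
    intro z
    rw [hψ_def]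
    rw [fderiv_fun_sub (hdiff z) ((fderiv ℝ φ x).differentiable z), (fderiv ℝ φ x).fderiv]
  have hbound : ∀ z ∈ segment ℝ x y, ‖fderiv ℝ ψ z‖ ≤ α * t := by
    intro z hz
    rw [hψd z]
    refine le_trans (hflip z) (mul_le_mul_of_nonneg_left ?_ hα)
    obtain ⟨a, b, ha, hb, hab, rfl⟩ := hz
    have : a • x + b • y - x = b • (y - x) := by
      have hx1 : a = 1 - b := by linarith
      subst hx1
      module
    rw [this, norm_smul, hyxnorm]
    rw [Real.norm_eq_abs, abs_of_nonneg hb]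
    nlinarith
  have key : ‖ψ y - ψ x‖ ≤ α * t * ‖y - x‖ :=
    (convex_segment x y).norm_image_sub_le_of_norm_fderiv_le
      (fun z hz => hψdiff z) hbound
      (left_mem_segment ℝ x y) (right_mem_segment ℝ x y)
  rw [hyxnorm] at key
  have hDy : fderiv ℝ φ x y - fderiv ℝ φ x x = t * fderiv ℝ φ x e := by
    rw [← map_sub, hyx, map_smul]; rfl
  have hψval : ψ y - ψ x = φ y - φ x - t * fderiv ℝ φ x e := by
    rw [hψ_def]; dsimp only; rw [← hDy]; ring
  have habs := abs_le.mp (by rwa [Real.norm_eq_abs, hψval] at key)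
  have hlow : φ x + t * fderiv ℝ φ x e - α * t * t ≤ φ y := by linarith [habs.1]
  have hD : t * fderiv ℝ φ x e ≤ ε' + α * t * t := by linarith
  have hfinal : fderiv ℝ φ x e ≤ ε' / t + t * α := by
    rw [div_add' _ _ _ ht.ne']
    rw [le_div_iff₀ ht]
    nlinarith
  simpa [he_def, ht_def, mul_comm] using hfinal
end

section
/- Let φ : ℝ^n → ℝ be differentiable with α-Lipschitz gradient (α ≥ 0), let δ ∈ (0,1), let ε̄ ≥ 0, let x ∈ [0,1]^n and let j be a coordinate with x_j > 0. If φ((1−δ)·x_j, x_{−j}) ≤ φ(x) + ε̄, then ∂_j φ(x) ≥ −( ε̄ / (δ·x_j) + δ·x_j·α ), where (t, x_{−j}) denotes the point obtained from x by replacing its j-th coordinate with t. -/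
/-- If `φ` has `α`-Lipschitz gradient, `x ∈ [0,1]^n`, `x_j > 0`, and the multiplicative
downward deviation `(1−δ)x_j` improves `φ` by at most `ε̄`, then
`∂_j φ(x) ≥ −(ε̄/(δ·x_j) + δ·x_j·α)`. -/
theorem partial_lower_bound_of_deviation {n : ℕ}
    (φ : EuclideanSpace ℝ (Fin n) → ℝ) (α : ℝ) (hα : 0 ≤ α)
    (hdiff : Differentiable ℝ φ)
    (hlip : ∀ x y, ‖gradient φ x - gradient φ y‖ ≤ α * ‖x - y‖)
    (δ : ℝ) (hδ : δ ∈ Set.Ioo (0 : ℝ) 1) (ε' : ℝ) (hε' : 0 ≤ ε')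
    (x : EuclideanSpace ℝ (Fin n)) (hx : ∀ j, x j ∈ Set.Icc (0 : ℝ) 1)
    (j : Fin n) (hj : 0 < x j)
    (h : φ (WithLp.toLp 2 (Function.update x j ((1 - δ) * x j))) ≤ φ x + ε') :
    -(ε' / (δ * x j) + δ * x j * α) ≤ fderiv ℝ φ x (EuclideanSpace.single j 1) := by
  set y : EuclideanSpace ℝ (Fin n) := WithLp.toLp 2 (Function.update x j ((1 - δ) * x j)) with hy
  have hyx : y - x = (-(δ * x j)) • EuclideanSpace.single j 1 := by
    ext k
    simp only [PiLp.sub_apply, PiLp.smul_apply, smul_eq_mul]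
    by_cases hk : k = j
    · subst hk
      simp [hy, Function.update_self, EuclideanSpace.single_apply]
      ring
    · simp [hy, Function.update_of_ne hk, EuclideanSpace.single_apply, hk]
  have hpos : 0 < δ * x j := mul_pos hδ.1 hj
  have hsingle : ‖(EuclideanSpace.single j (1:ℝ))‖ = 1 := by
    rw [EuclideanSpace.norm_single]; norm_num
  have hnyx : ‖y - x‖ = δ * x j := by
    rw [hyx, norm_smul, hsingle, mul_one, Real.norm_eq_abs, abs_neg,
      abs_of_pos hpos]
  -- Lipschitz bound on fderiv
  have hflip : ∀ a b : EuclideanSpace ℝ (Fin n),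
      ‖fderiv ℝ φ a - fderiv ℝ φ b‖ ≤ α * ‖a - b‖ := by
    intro a b
    have ha := (hdiff a).hasGradientAt.hasFDerivAt.fderiv
    have hb := (hdiff b).hasGradientAt.hasFDerivAt.fderiv
    rw [ha, hb, ← map_sub, (InnerProductSpace.toDual ℝ _).norm_map]
    exact hlip a b
  -- Mean value inequality on segment
  have key : ‖φ y - φ x - (fderiv ℝ φ x) (y - x)‖ ≤ (α * ‖y - x‖) * ‖y - x‖ := by
    apply (convex_segment x y).norm_image_sub_le_of_norm_fderiv_le'
        (fun z _ => hdiff z)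
        (fun z hz => ?_)
        (left_mem_segment ℝ x y) (right_mem_segment ℝ x y)
    calc ‖fderiv ℝ φ z - fderiv ℝ φ x‖ ≤ α * ‖z - x‖ := hflip z x
      _ ≤ α * ‖y - x‖ := by
          apply mul_le_mul_of_nonneg_left _ hα
          obtain ⟨a, b, ha, hb, hab, rfl⟩ := hz
          have : a • x + b • y - x = b • (y - x) := by
            have hax : a = 1 - b := by linarith
            rw [hax]; module
          rw [this, norm_smul, Real.norm_eq_abs, abs_of_nonneg hb]
          nlinarith [norm_nonneg (y - x)]
  have hd : (fderiv ℝ φ x) (y - x) = (-(δ * x j)) * fderiv ℝ φ x (EuclideanSpace.single j 1) := by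
    rw [hyx, map_smul]; simp
  have h2 : (fderiv ℝ φ x) (y - x) ≤ φ y - φ x + (α * ‖y - x‖) * ‖y - x‖ := by
    rw [Real.norm_eq_abs] at key
    nlinarith [le_abs_self (φ y - φ x - (fderiv ℝ φ x) (y - x)),
      neg_abs_le (φ y - φ x - (fderiv ℝ φ x) (y - x))]
  rw [hd, hnyx] at h2
  set D := (fderiv ℝ φ x) (EuclideanSpace.single j 1) with hD
  have h3 : -(ε' + α * (δ * x j) * (δ * x j)) ≤ D * (δ * x j) := by nlinarith
  have h4 : (-(ε' + α * (δ * x j) * (δ * x j))) / (δ * x j) ≤ D :=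
    (div_le_iff₀ hpos).mpr h3
  have h5 : (-(ε' + α * (δ * x j) * (δ * x j))) / (δ * x j)
      = -(ε' / (δ * x j) + δ * x j * α) := by
    rw [div_eq_iff hpos.ne']
    rw [neg_mul, add_mul, div_mul_cancel₀ _ hpos.ne']
    ring
  linarith [h5 ▸ h4]
end

section
/- Let φ : ℝ^n → ℝ be differentiable with α-Lipschitz gradient (α > 0), let ε > 0, δ ∈ (0, 1/2], ε̄ ≥ 0, and assume ε̄/δ² + δ·α ≤ ε/2 and δ·√n·α ≤ ε/2. Suppose x ∈ [0,1]^n satisfies, for every coordinate j, both φ((1−δ)·x_j, x_{−j}) ≤ φ(x) + ε̄ and φ((1−δ)·x_j + δ, x_{−j}) ≤ φ(x) + ε̄. Define x̄ coordinatewise by: x̄_j = 0 if x_j < δ, x̄_j = 1 if x_j > 1−δ, and x̄_j = x_j otherwise. Then x̄ ∈ [0,1]^n and for every coordinate j: if x̄_j > 0 then ∂_j φ(x̄) ≥ −ε, and if x̄_j < 1 then ∂_j φ(x̄) ≤ ε. -/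
open InnerProductSpace

private lemma grad_inner_eq {n : ℕ} (φ : EuclideanSpace ℝ (Fin n) → ℝ)
    (v y : EuclideanSpace ℝ (Fin n)) :
    ⟪gradient φ v, y⟫_ℝ = fderiv ℝ φ v y := by
  unfold gradient
  exact InnerProductSpace.toDual_symm_apply

private lemma fderiv_single_lipschitz {n : ℕ}
    (φ : EuclideanSpace ℝ (Fin n) → ℝ) (α : ℝ)
    (hlip : ∀ x y, ‖gradient φ x - gradient φ y‖ ≤ α * ‖x - y‖)
    (z w : EuclideanSpace ℝ (Fin n)) (j : Fin n) :
    |fderiv ℝ φ z (EuclideanSpace.single j 1) - fderiv ℝ φ w (EuclideanSpace.single j 1)|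
      ≤ α * ‖z - w‖ := by
  rw [← grad_inner_eq, ← grad_inner_eq, ← inner_sub_left]
  calc |⟪gradient φ z - gradient φ w, (EuclideanSpace.single j 1 : EuclideanSpace ℝ (Fin n))⟫_ℝ|
      ≤ ‖gradient φ z - gradient φ w‖ *
        ‖(EuclideanSpace.single j 1 : EuclideanSpace ℝ (Fin n))‖ := abs_real_inner_le_norm _ _
    _ ≤ α * ‖z - w‖ := by
        rw [EuclideanSpace.norm_single]
        simpa using hlip z w

private lemma update_eq_add {n : ℕ} (x : EuclideanSpace ℝ (Fin n)) (j : Fin n) (v : ℝ) :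
    WithLp.toLp 2 (Function.update x j v)
      = x + (v - x j) • (EuclideanSpace.single j 1 : EuclideanSpace ℝ (Fin n)) := by
  ext i
  rcases eq_or_ne i j with rfl | h
  · simp [EuclideanSpace.single_apply]
  · simp [Function.update_of_ne h, EuclideanSpace.single_apply, h]

private lemma step_bound {n : ℕ} (φ : EuclideanSpace ℝ (Fin n) → ℝ) (α : ℝ) (hα : 0 ≤ α)
    (hdiff : Differentiable ℝ φ)
    (hlip : ∀ x y, ‖gradient φ x - gradient φ y‖ ≤ α * ‖x - y‖)
    (x : EuclideanSpace ℝ (Fin n)) (j : Fin n) {t ε' : ℝ} (hε' : 0 ≤ ε')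
    (h : φ (x + t • (EuclideanSpace.single j 1 : EuclideanSpace ℝ (Fin n))) ≤ φ x + ε') :
    t * fderiv ℝ φ x (EuclideanSpace.single j 1) ≤ ε' + α * t ^ 2 := by
  set E : EuclideanSpace ℝ (Fin n) := EuclideanSpace.single j 1 with hE
  have hg : ∀ s : ℝ, HasDerivAt (fun s : ℝ => φ (x + s • E)) (fderiv ℝ φ (x + s • E) E) s := by
    intro s
    have h1 : HasDerivAt (fun s : ℝ => x + s • E) E s := by
      simpa using ((hasDerivAt_id s).smul_const E).const_add x
    exact (hdiff (x + s • E)).hasFDerivAt.comp_hasDerivAt s h1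
  obtain ⟨c, hc, hct⟩ : ∃ c : ℝ, |c| ≤ |t| ∧ t * fderiv ℝ φ (x + c • E) E ≤ ε' := by
    rcases lt_trichotomy t 0 with ht | rfl | ht
    · obtain ⟨c, hcmem, hceq⟩ := exists_hasDerivAt_eq_slope (fun s => φ (x + s • E))
        (fun s => fderiv ℝ φ (x + s • E) E) ht
        (fun c _ => (hg c).continuousAt.continuousWithinAt) (fun c _ => hg c)
      refine ⟨c, ?_, ?_⟩
      · rw [abs_of_neg hcmem.2, abs_of_neg ht]; linarith [hcmem.1]
      · have htne : t ≠ 0 := ne_of_lt ht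
        have h0 : φ (x + (0:ℝ) • E) = φ x := by simp
        have hq : t / (0 - t) = -1 := by field_simp; ring
        have : t * fderiv ℝ φ (x + c • E) E = φ (x + t • E) - φ x := by
          rw [hceq, h0]
          calc t * ((φ x - φ (x + t • E)) / (0 - t))
              = t / (0 - t) * (φ x - φ (x + t • E)) := by ring
            _ = φ (x + t • E) - φ x := by rw [hq]; ring
        rw [this]; linarith
    · exact ⟨0, le_refl _, by simpa using hε'⟩
    · obtain ⟨c, hcmem, hceq⟩ := exists_hasDerivAt_eq_slope (fun s => φ (x + s • E))
        (fun s => fderiv ℝ φ (x + s • E) E) ht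
        (fun c _ => (hg c).continuousAt.continuousWithinAt) (fun c _ => hg c)
      refine ⟨c, ?_, ?_⟩
      · rw [abs_of_pos hcmem.1, abs_of_pos ht]; linarith [hcmem.2]
      · have htne : t ≠ 0 := ne_of_gt ht
        have h0 : φ (x + (0:ℝ) • E) = φ x := by simp
        have hq : t / (t - 0) = 1 := by field_simp; ring
        have : t * fderiv ℝ φ (x + c • E) E = φ (x + t • E) - φ x := by
          rw [hceq, h0]
          calc t * ((φ (x + t • E) - φ x) / (t - 0))
              = t / (t - 0) * (φ (x + t • E) - φ x) := by ring
            _ = φ (x + t • E) - φ x := by rw [hq]; ring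
        rw [this]; linarith
  have hnorm : ‖x - (x + c • E)‖ = |c| := by
    rw [sub_add_cancel_left, norm_neg, norm_smul, hE, EuclideanSpace.norm_single]
    simp [Real.norm_eq_abs]
  have h1 : |fderiv ℝ φ x E - fderiv ℝ φ (x + c • E) E| ≤ α * |c| := by
    have := fderiv_single_lipschitz φ α hlip x (x + c • E) j
    rwa [← hE, hnorm] at this
  have h2 : t * (fderiv ℝ φ x E - fderiv ℝ φ (x + c • E) E) ≤ |t| * (α * |c|) := by
    refine le_trans (le_abs_self _) ?_
    rw [abs_mul]
    exact mul_le_mul_of_nonneg_left h1 (abs_nonneg t)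
  have h3 : |t| * (α * |c|) ≤ α * t ^ 2 := by
    have h4 : α * |t| * |c| ≤ α * |t| * |t| :=
      mul_le_mul_of_nonneg_left hc (mul_nonneg hα (abs_nonneg t))
    nlinarith [h4, abs_mul_abs_self t]
  have hsplit : t * fderiv ℝ φ x E
      = t * fderiv ℝ φ (x + c • E) E + t * (fderiv ℝ φ x E - fderiv ℝ φ (x + c • E) E) := by
    ring
  rw [hsplit]
  linarith

set_option maxHeartbeats 1000000 in
/-- Rounding a CCLS solution `x` to `x̄` (sending coordinates `< δ` to `0` and `> 1−δ` to `1`)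
produces an `ε`-approximate fixed point of the gradient descent dynamics, provided
`ε̄/δ² + δα ≤ ε/2` and `δ√n·α ≤ ε/2`. -/
theorem gd_fixed_point_of_ccls_solution {n : ℕ}
    (φ : EuclideanSpace ℝ (Fin n) → ℝ) (α : ℝ) (hα : 0 < α)
    (hdiff : Differentiable ℝ φ)
    (hlip : ∀ x y, ‖gradient φ x - gradient φ y‖ ≤ α * ‖x - y‖)
    (ε δ ε' : ℝ) (hε : 0 < ε) (hδ : δ ∈ Set.Ioc (0 : ℝ) (1 / 2)) (hε' : 0 ≤ ε')
    (hcond1 : ε' / δ ^ 2 + δ * α ≤ ε / 2)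
    (hcond2 : δ * Real.sqrt n * α ≤ ε / 2)
    (x : EuclideanSpace ℝ (Fin n)) (hx : ∀ j, x j ∈ Set.Icc (0 : ℝ) 1)
    (hsol : ∀ j : Fin n,
      φ (WithLp.toLp 2 (Function.update x j ((1 - δ) * x j))) ≤ φ x + ε' ∧
        φ (WithLp.toLp 2 (Function.update x j ((1 - δ) * x j + δ))) ≤ φ x + ε')
    (x' : EuclideanSpace ℝ (Fin n))
    (hx' : ∀ j, x' j = if x j < δ then 0 else if 1 - δ < x j then 1 else x j) :
    (∀ j, x' j ∈ Set.Icc (0 : ℝ) 1) ∧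
      ∀ j : Fin n,
        (0 < x' j → -ε ≤ fderiv ℝ φ x' (EuclideanSpace.single j 1)) ∧
          (x' j < 1 → fderiv ℝ φ x' (EuclideanSpace.single j 1) ≤ ε) := by
  obtain ⟨hδ0, hδhalf⟩ := hδ
  have hα0 : (0:ℝ) ≤ α := hα.le
  -- x' is in the cube
  have hmem : ∀ j, x' j ∈ Set.Icc (0 : ℝ) 1 := by
    intro j
    rw [hx' j]
    split_ifs with h1 h2
    · exact ⟨le_refl _, zero_le_one⟩
    · exact ⟨zero_le_one, le_refl _⟩
    · exact hx j
  refine ⟨hmem, fun j => ?_⟩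
  -- distance bound between x and x'
  have hdist : ‖x' - x‖ ≤ δ * Real.sqrt n := by
    have hcoord : ∀ i, ‖(x' - x) i‖ ^ 2 ≤ δ ^ 2 := by
      intro i
      have hxi := hx i
      have h := hx' i
      have happ : (x' - x) i = x' i - x i := rfl
      rw [happ, Real.norm_eq_abs]
      have habs : |x' i - x i| ≤ δ := by
        rw [h]
        split_ifs with h1 h2
        · rw [abs_of_nonpos (by linarith [hxi.1])]
          linarith [hxi.1, h1]
        · rw [abs_of_nonneg (by linarith [hxi.2])]
          linarith [hxi.2, h2]
        · simp [hδ0.le]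
      nlinarith [abs_nonneg (x' i - x i), habs]
    rw [EuclideanSpace.norm_eq]
    have hsum : (∑ i, ‖(x' - x) i‖ ^ 2) ≤ (n : ℝ) * δ ^ 2 := by
      calc (∑ i, ‖(x' - x) i‖ ^ 2) ≤ ∑ _i : Fin n, δ ^ 2 :=
            Finset.sum_le_sum fun i _ => hcoord i
        _ = (n : ℝ) * δ ^ 2 := by
            rw [Finset.sum_const, Finset.card_univ, Fintype.card_fin, nsmul_eq_mul]
    calc Real.sqrt (∑ i, ‖(x' - x) i‖ ^ 2) ≤ Real.sqrt ((n : ℝ) * δ ^ 2) :=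
          Real.sqrt_le_sqrt hsum
      _ = δ * Real.sqrt n := by
          rw [Real.sqrt_mul (Nat.cast_nonneg n), Real.sqrt_sq hδ0.le, mul_comm]
  -- difference of partial derivatives at x and x'
  have hDdiff : |fderiv ℝ φ x' (EuclideanSpace.single j 1)
      - fderiv ℝ φ x (EuclideanSpace.single j 1)| ≤ ε / 2 := by
    refine le_trans (fderiv_single_lipschitz φ α hlip x' x j) ?_
    calc α * ‖x' - x‖ ≤ α * (δ * Real.sqrt n) :=
          mul_le_mul_of_nonneg_left hdist hα0
      _ = δ * Real.sqrt n * α := by ring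
      _ ≤ ε / 2 := hcond2
  have hDdiff' := abs_le.mp hDdiff
  have hxj := hx j
  constructor
  · -- lower bound
    intro hpos
    have hxjδ : δ ≤ x j := by
      by_contra hcon
      push_neg at hcon
      rw [hx' j, if_pos hcon] at hpos
      exact lt_irrefl _ hpos
    -- step with t = -(δ * x j)
    have hupd := (hsol j).1
    rw [update_eq_add] at hupd
    have ht : (1 - δ) * x j - x j = -(δ * x j) := by ring
    rw [ht] at hupd
    have hstep := step_bound φ α hα0 hdiff hlip x j hε' hupd
    set s : ℝ := δ * x j with hs
    have hs0 : 0 < s := mul_pos hδ0 (lt_of_lt_of_le hδ0 hxjδ)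
    have hsδ2 : δ ^ 2 ≤ s := by nlinarith
    have hsδ : s ≤ δ := by nlinarith [hxj.2]
    set D : ℝ := fderiv ℝ φ x (EuclideanSpace.single j 1) with hD
    have hstep' : -(s) * D ≤ ε' + α * s ^ 2 := by
      have : (-(δ * x j)) ^ 2 = s ^ 2 := by ring
      calc -(s) * D = -(δ * x j) * D := by rw [hs]
        _ ≤ ε' + α * (-(δ * x j)) ^ 2 := hstep
        _ = ε' + α * s ^ 2 := by rw [this]
    have hDlb : -D ≤ ε' / δ ^ 2 + δ * α := by
      have hdiv : -D ≤ ε' / s + α * s := by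
        rw [← sub_nonneg]
        have key : (ε' / s + α * s - (-D)) * s = ε' + α * s ^ 2 - (-(s) * D) := by
          field_simp
        nlinarith [hstep']
      have h1 : ε' / s ≤ ε' / δ ^ 2 := by
        apply div_le_div_of_nonneg_left hε' (by positivity) hsδ2
      have h2 : α * s ≤ δ * α := by nlinarith
      linarith
    have : -D ≤ ε / 2 := le_trans hDlb hcond1
    have hlow := hDdiff'.1
    rw [hD] at this
    linarith [hDdiff'.1]
  · -- upper bound
    intro hlt
    have hxjδ : x j ≤ 1 - δ := by
      by_contra hcon
      push_neg at hcon
      have hnot : ¬ x j < δ := by push_neg; linarith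
      rw [hx' j, if_neg hnot, if_pos hcon] at hlt
      exact lt_irrefl _ hlt
    have hupd := (hsol j).2
    rw [update_eq_add] at hupd
    have ht : (1 - δ) * x j + δ - x j = δ * (1 - x j) := by ring
    rw [ht] at hupd
    have hstep := step_bound φ α hα0 hdiff hlip x j hε' hupd
    set s : ℝ := δ * (1 - x j) with hs
    have hs0 : 0 < s := mul_pos hδ0 (by linarith)
    have hsδ2 : δ ^ 2 ≤ s := by nlinarith
    have hsδ : s ≤ δ := by nlinarith [hxj.1]
    set D : ℝ := fderiv ℝ φ x (EuclideanSpace.single j 1) with hD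
    have hstep' : s * D ≤ ε' + α * s ^ 2 := hstep
    have hDub : D ≤ ε' / δ ^ 2 + δ * α := by
      have hdiv : D ≤ ε' / s + α * s := by
        rw [← sub_nonneg]
        have key : (ε' / s + α * s - D) * s = ε' + α * s ^ 2 - s * D := by
          field_simp
        nlinarith [hstep']
      have h1 : ε' / s ≤ ε' / δ ^ 2 := by
        apply div_le_div_of_nonneg_left hε' (by positivity) hsδ2
      have h2 : α * s ≤ δ * α := by nlinarith
      linarith
    have : D ≤ ε / 2 := le_trans hDub hcond1
    rw [hD] at this
    linarith [hDdiff'.2]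
end

section
/- Let φ : ℝ^n → ℝ be differentiable with α-Lipschitz gradient (α ≥ 0), let ε̄ > 0, κ > 0, and set ε = κ/(n·ε̄). Suppose x ∈ [0,1]^n satisfies: ∂_j φ(x) ≥ −ε for every j with x_j > 0, and ∂_j φ(x) ≤ ε for every j with x_j < 1. Then for every y ∈ [0,1]^n with ‖y − x‖₂ ≤ ε̄ one has φ(x) ≥ φ(y) − (α/2)·ε̄² − κ. -/
open RealInnerProductSpace

-- descent lemma
theorem descent_lemma {E : Type*} [NormedAddCommGroup E] [InnerProductSpace ℝ E]
    [CompleteSpace E]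
    (φ : E → ℝ) (α : ℝ) (hα : 0 ≤ α) (hdiff : Differentiable ℝ φ)
    (hlip : ∀ x y, ‖gradient φ x - gradient φ y‖ ≤ α * ‖x - y‖) (x y : E) :
    φ y ≤ φ x + ⟪gradient φ x, y - x⟫ + α / 2 * ‖y - x‖ ^ 2 := by
  set v := y - x with hv
  set g := gradient φ x with hg
  have hψ : ∀ t : ℝ, HasDerivAt (fun t : ℝ => φ (x + t • v))
      ⟪gradient φ (x + t • v), v⟫ t := by
    intro t
    have hline : HasDerivAt (fun t : ℝ => x + t • v) v t := by
      simpa using ((hasDerivAt_id t).smul_const v).const_add x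
    have := ((hdiff (x + t • v)).hasGradientAt.hasFDerivAt).comp_hasDerivAt t hline
    simpa [InnerProductSpace.toDual_apply_apply, Function.comp_def] using this
  set F : ℝ → ℝ := fun t => φ (x + t • v) - t * ⟪g, v⟫ - α * ‖v‖ ^ 2 * t ^ 2 / 2 with hF
  have hF' : ∀ t : ℝ, HasDerivAt F
      (⟪gradient φ (x + t • v), v⟫ - ⟪g, v⟫ - α * ‖v‖ ^ 2 * t) t := by
    intro t
    have h1 := (hψ t).sub ((hasDerivAt_id t).mul_const ⟪g, v⟫)
    have h2 : HasDerivAt (fun t : ℝ => α * ‖v‖ ^ 2 * t ^ 2 / 2) (α * ‖v‖ ^ 2 * t) t := by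
      have := (hasDerivAt_pow 2 t).const_mul (α * ‖v‖ ^ 2)
      have := this.div_const 2
      exact this.congr_deriv (by ring)
    exact (h1.sub h2).congr_deriv (by ring)
  have hanti : AntitoneOn F (Set.Icc 0 1) := by
    apply antitoneOn_of_deriv_nonpos (convex_Icc (0:ℝ) 1)
    · exact Continuous.continuousOn
        (continuous_iff_continuousAt.2 fun t => (hF' t).differentiableAt.continuousAt)
    · intro t _; exact (hF' t).differentiableAt.differentiableWithinAt
    · intro t ht
      rw [(hF' t).deriv]
      rw [interior_Icc] at ht
      have hcs : ⟪gradient φ (x + t • v) - g, v⟫ ≤ ‖gradient φ (x + t • v) - g‖ * ‖v‖ :=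
        real_inner_le_norm _ _
      have hl : ‖gradient φ (x + t • v) - g‖ ≤ α * (t * ‖v‖) := by
        have := hlip (x + t • v) x
        simpa [norm_smul, abs_of_pos ht.1, mul_assoc] using this
      have : ⟪gradient φ (x + t • v), v⟫ - ⟪g, v⟫ ≤ α * (t * ‖v‖) * ‖v‖ := by
        rw [← inner_sub_left]
        calc _ ≤ ‖gradient φ (x + t • v) - g‖ * ‖v‖ := hcs
        _ ≤ α * (t * ‖v‖) * ‖v‖ := by
            apply mul_le_mul_of_nonneg_right hl (norm_nonneg _)
      nlinarith [sq_nonneg ‖v‖]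
  have h01 := hanti (Set.left_mem_Icc.2 one_pos.le) (Set.right_mem_Icc.2 one_pos.le) one_pos.le
  simp only [F] at h01
  have hx0 : x + (0:ℝ) • v = x := by simp
  have hx1 : x + (1:ℝ) • v = y := by simp [hv]
  rw [hx0, hx1] at h01
  nlinarith [h01]


/-- An `ε`-approximate gradient descent fixed point with `ε = κ/(n·ε̄)` is a KKT solution with
parameters `(ε̄, κ)`: `φ(x) ≥ φ(y) − (α/2)ε̄² − κ` for all `y ∈ [0,1]^n` with `‖y − x‖ ≤ ε̄`. -/
theorem kkt_of_gd_fixed_point {n : ℕ}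
    (φ : EuclideanSpace ℝ (Fin n) → ℝ) (α : ℝ) (hα : 0 ≤ α)
    (hdiff : Differentiable ℝ φ)
    (hlip : ∀ x y, ‖gradient φ x - gradient φ y‖ ≤ α * ‖x - y‖)
    (ε' κ : ℝ) (hε' : 0 < ε') (hκ : 0 < κ)
    (x : EuclideanSpace ℝ (Fin n)) (hx : ∀ j, x j ∈ Set.Icc (0 : ℝ) 1)
    (hlow : ∀ j, 0 < x j →
      -(κ / (n * ε')) ≤ fderiv ℝ φ x (EuclideanSpace.single j 1))
    (hhigh : ∀ j, x j < 1 →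
      fderiv ℝ φ x (EuclideanSpace.single j 1) ≤ κ / (n * ε')) :
    ∀ y : EuclideanSpace ℝ (Fin n), (∀ j, y j ∈ Set.Icc (0 : ℝ) 1) → ‖y - x‖ ≤ ε' →
      φ x ≥ φ y - α / 2 * ε' ^ 2 - κ := by
  intro y hy hyx
  set ε : ℝ := κ / (n * ε') with hεdef
  set g := gradient φ x with hg
  -- gradient coordinates are the partial derivatives
  have hgj : ∀ j, g j = fderiv ℝ φ x (EuclideanSpace.single j 1) := by
    intro j
    have : fderiv ℝ φ x (EuclideanSpace.single j 1) = ⟪g, EuclideanSpace.single j 1⟫ := by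
      rw [hg, gradient, InnerProductSpace.toDual_symm_apply]
    rw [this, real_inner_comm, EuclideanSpace.inner_single_left]
    simp
  -- coordinate bound
  have hcoord : ∀ j, |y j - x j| ≤ ε' := by
    intro j
    refine le_trans ?_ hyx
    have := EuclideanSpace.norm_eq (y - x)
    calc |y j - x j| = Real.sqrt ((y j - x j) ^ 2) := by
          rw [Real.sqrt_sq_eq_abs]
      _ ≤ ‖y - x‖ := by
          rw [this]
          apply Real.sqrt_le_sqrt
          calc (y j - x j) ^ 2 = ‖(y - x) j‖ ^ 2 := by
                simp [Real.norm_eq_abs, sq_abs]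
            _ ≤ ∑ i, ‖(y - x) i‖ ^ 2 :=
                Finset.single_le_sum (fun i _ => sq_nonneg ‖(y - x) i‖) (Finset.mem_univ j)
  -- inner product bound
  have hinner : ⟪g, y - x⟫ ≤ κ := by
    have hterm : ∀ j : Fin n, g j * (y j - x j) ≤ κ / n := by
      intro j
      have hn : (0:ℝ) < n := by exact_mod_cast j.pos
      have hε0 : 0 ≤ ε := le_of_lt (div_pos hκ (mul_pos hn hε'))
      have hεε' : ε * ε' = κ / n := by
        rw [hεdef]
        field_simp
      rw [← hεε']
      rcases lt_trichotomy (y j - x j) 0 with h | h | h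
      · have hxj : 0 < x j := lt_of_lt_of_le (by linarith [(hy j).1]) (by linarith)
        have hgl : -ε ≤ g j := by rw [hgj j]; exact hlow j hxj
        nlinarith [abs_le.1 (hcoord j)]
      · simp [h, mul_nonneg hε0 hε'.le]
      · have hxj : x j < 1 := lt_of_lt_of_le (by linarith) (hy j).2
        have hgu : g j ≤ ε := by rw [hgj j]; exact hhigh j hxj
        nlinarith [abs_le.1 (hcoord j)]
    have hsum : ⟪g, y - x⟫ = ∑ j, g j * (y j - x j) := by
      rw [real_inner_comm]
      simp [PiLp.inner_apply, RCLike.inner_apply, PiLp.sub_apply]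
    rw [hsum]
    rcases Nat.eq_zero_or_pos n with hn | hn
    · subst hn; simpa using hκ.le
    · calc ∑ j, g j * (y j - x j) ≤ ∑ _j : Fin n, κ / n :=
            Finset.sum_le_sum fun j _ => hterm j
        _ = κ := by
            rw [Finset.sum_const, Finset.card_univ, Fintype.card_fin, nsmul_eq_mul]
            field_simp
  have hdesc := descent_lemma φ α hα hdiff hlip x y
  have hquad : α / 2 * ‖y - x‖ ^ 2 ≤ α / 2 * ε' ^ 2 := by
    apply mul_le_mul_of_nonneg_left _ (by linarith)
    exact pow_le_pow_left₀ (norm_nonneg _) hyx 2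
  linarith
end

section
/- Let φ : ℝ^n → ℝ be differentiable with α-Lipschitz gradient (α ≥ 0), let ε̄ > 0, κ ≥ 0, and suppose x ∈ [0,1]^n satisfies: φ(x) ≥ φ(y) − (α/2)·ε̄² − κ for every y ∈ [0,1]^n with ‖y − x‖₂ ≤ ε̄. If j is a coordinate with x_j + ε̄ ≤ 1, then ∂_j φ(x) ≤ (3α/2)·ε̄ + κ/ε̄. -/
/-- At a KKT solution `x` with parameters `(ε̄, κ)`, any coordinate `j` with `x_j + ε̄ ≤ 1`
satisfies `∂_j φ(x) ≤ (3α/2)ε̄ + κ/ε̄`. -/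
theorem partial_upper_bound_of_kkt {n : ℕ}
    (φ : EuclideanSpace ℝ (Fin n) → ℝ) (α : ℝ) (hα : 0 ≤ α)
    (hdiff : Differentiable ℝ φ)
    (hlip : ∀ x y, ‖gradient φ x - gradient φ y‖ ≤ α * ‖x - y‖)
    (ε' κ : ℝ) (hε' : 0 < ε') (hκ : 0 ≤ κ)
    (x : EuclideanSpace ℝ (Fin n)) (hx : ∀ j, x j ∈ Set.Icc (0 : ℝ) 1)
    (hkkt : ∀ y : EuclideanSpace ℝ (Fin n), (∀ j, y j ∈ Set.Icc (0 : ℝ) 1) →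
      ‖y - x‖ ≤ ε' → φ x ≥ φ y - α / 2 * ε' ^ 2 - κ)
    (j : Fin n) (hj : x j + ε' ≤ 1) :
    fderiv ℝ φ x (EuclideanSpace.single j 1) ≤ 3 * α / 2 * ε' + κ / ε' := by
  set v : EuclideanSpace ℝ (Fin n) := ε' • EuclideanSpace.single j 1 with hv
  set y : EuclideanSpace ℝ (Fin n) := x + v with hy
  have hyx : y - x = v := by simp [hy]
  have hnv : ‖v‖ = ε' := by
    rw [hv, norm_smul, EuclideanSpace.norm_single]
    simp [abs_of_pos hε', hε'.le]
  -- fderiv differences equal gradient differences in norm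
  have hfd : ∀ z w : EuclideanSpace ℝ (Fin n),
      ‖fderiv ℝ φ z - fderiv ℝ φ w‖ = ‖gradient φ z - gradient φ w‖ := by
    intro z w
    unfold gradient
    rw [← LinearIsometryEquiv.map_sub, LinearIsometryEquiv.norm_map]
  -- mean value inequality on segment [x, y]
  have hseg : ∀ z ∈ segment ℝ x y, ‖fderiv ℝ φ z - fderiv ℝ φ x‖ ≤ α * ε' := by
    intro z hz
    rw [hfd]
    refine (hlip z x).trans ?_
    have : ‖z - x‖ ≤ ‖y - x‖ := by
      obtain ⟨a, b, ha, hb, hab, rfl⟩ := hz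
      have : a • x + b • y - x = b • (y - x) := by
        rw [show a = 1 - b by linarith]; module
      rw [this, norm_smul]
      calc |b| * ‖y - x‖ = b * ‖y - x‖ := by rw [abs_of_nonneg hb]
        _ ≤ 1 * ‖y - x‖ := by nlinarith [norm_nonneg (y - x)]
        _ = ‖y - x‖ := one_mul _
    exact mul_le_mul_of_nonneg_left (this.trans_eq (by rw [hyx, hnv])) hα
  have hmv : ‖φ y - φ x - (fderiv ℝ φ x) (y - x)‖ ≤ (α * ε') * ‖y - x‖ :=
    (convex_segment x y).norm_image_sub_le_of_norm_fderiv_le'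
      (fun z _ => hdiff z) hseg (left_mem_segment ℝ x y) (right_mem_segment ℝ x y)
  rw [hyx, hnv] at hmv
  -- y is feasible
  have hyk : ∀ k, y k = x k + if k = j then ε' else 0 := by
    intro k
    simp only [hy, hv, PiLp.add_apply, PiLp.smul_apply, EuclideanSpace.single_apply,
      smul_eq_mul]
    split_ifs <;> ring
  have hyIcc : ∀ k, y k ∈ Set.Icc (0 : ℝ) 1 := by
    intro k
    have hxk := hx k
    rw [hyk k]
    split_ifs with h
    · subst h
      exact ⟨by linarith [hxk.1, hε'.le], hj⟩
    · simpa using hxk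
  have hkey := hkkt y hyIcc (by rw [hyx, hnv])
  -- fderiv at v = ε' * fderiv at single
  have hlin : (fderiv ℝ φ x) v = ε' * (fderiv ℝ φ x) (EuclideanSpace.single j 1) := by
    rw [hv, map_smul]; rfl
  rw [Real.norm_eq_abs] at hmv
  have h1 := abs_le.mp hmv
  have h2 : φ y - φ x ≤ α / 2 * ε' ^ 2 + κ := by linarith [hkey]
  have h3 : ε' * (fderiv ℝ φ x) (EuclideanSpace.single j 1) ≤ 3 * α / 2 * ε' ^ 2 + κ := by
    rw [← hlin]; nlinarith
  calc fderiv ℝ φ x (EuclideanSpace.single j 1)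
      = ε' * (fderiv ℝ φ x) (EuclideanSpace.single j 1) / ε' := by field_simp
    _ ≤ (3 * α / 2 * ε' ^ 2 + κ) / ε' := by gcongr
    _ = 3 * α / 2 * ε' + κ / ε' := by field_simp
end

section
/- Let φ : ℝ^n → ℝ be differentiable with α-Lipschitz gradient (α ≥ 0), let ε̄ > 0, κ ≥ 0, and suppose x ∈ [0,1]^n satisfies: φ(x) ≥ φ(y) − (α/2)·ε̄² − κ for every y ∈ [0,1]^n with ‖y − x‖₂ ≤ ε̄. If j is a coordinate with x_j ≥ ε̄, then ∂_j φ(x) ≥ −( (3α/2)·ε̄ + κ/ε̄ ). -/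
/-- At a KKT solution `x` with parameters `(ε̄, κ)`, any coordinate `j` with `x_j ≥ ε̄`
satisfies `∂_j φ(x) ≥ −((3α/2)ε̄ + κ/ε̄)`. -/
theorem partial_lower_bound_of_kkt {n : ℕ}
    (φ : EuclideanSpace ℝ (Fin n) → ℝ) (α : ℝ) (hα : 0 ≤ α)
    (hdiff : Differentiable ℝ φ)
    (hlip : ∀ x y, ‖gradient φ x - gradient φ y‖ ≤ α * ‖x - y‖)
    (ε' κ : ℝ) (hε' : 0 < ε') (hκ : 0 ≤ κ)
    (x : EuclideanSpace ℝ (Fin n)) (hx : ∀ j, x j ∈ Set.Icc (0 : ℝ) 1)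
    (hkkt : ∀ y : EuclideanSpace ℝ (Fin n), (∀ j, y j ∈ Set.Icc (0 : ℝ) 1) →
      ‖y - x‖ ≤ ε' → φ x ≥ φ y - α / 2 * ε' ^ 2 - κ)
    (j : Fin n) (hj : ε' ≤ x j) :
    -(3 * α / 2 * ε' + κ / ε') ≤ fderiv ℝ φ x (EuclideanSpace.single j 1) := by
  -- fderiv Lipschitz
  have hlipf : ∀ z w, ‖fderiv ℝ φ z - fderiv ℝ φ w‖ ≤ α * ‖z - w‖ := by
    intro z w
    have := hlip z w
    rwa [gradient, gradient, ← map_sub, LinearIsometryEquiv.norm_map] at this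
  set v : EuclideanSpace ℝ (Fin n) := EuclideanSpace.single j 1 with hv
  have hnv : ‖v‖ = 1 := by simp [hv]
  set y : EuclideanSpace ℝ (Fin n) := x - ε' • v with hy
  have hyx : y - x = -(ε' • v) := by rw [hy]; abel
  have hnyx : ‖y - x‖ = ε' := by
    rw [hyx, norm_neg, norm_smul, hnv, Real.norm_eq_abs, abs_of_pos hε', mul_one]
  -- y in box
  have hybox : ∀ i, y i ∈ Set.Icc (0 : ℝ) 1 := by
    intro i
    have hyi : y i = x i - ε' * (if i = j then 1 else 0) := by
      simp [hy, EuclideanSpace.single_apply, v]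
    by_cases h : i = j
    · subst h
      have h1 : (if i = i then (1:ℝ) else 0) = 1 := if_pos rfl
      rw [hyi, h1, mul_one]
      have h2 := (hx i).2
      exact ⟨by linarith, by linarith⟩
    · rw [hyi, if_neg h]; simpa using hx i
  -- KKT bound
  have hkkt' := hkkt y hybox (le_of_eq hnyx)
  -- mean value bound on segment
  set L := fderiv ℝ φ x with hL
  have hseg : segment ℝ x y ⊆ Metric.closedBall x ε' := by
    apply (convex_closedBall x ε').segment_subset
    · simp [hε'.le]
    · simpa [Metric.mem_closedBall, dist_eq_norm] using hnyx.le
  have hmv : ‖φ y - φ x - L (y - x)‖ ≤ (α * ε') * ‖y - x‖ := by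
    apply (convex_segment x y).norm_image_sub_le_of_norm_fderiv_le'
      (fun z _ => hdiff z)
      (fun z hz => ?_) (left_mem_segment ℝ x y) (right_mem_segment ℝ x y)
    have h1 := hlipf z x
    have h2 : ‖z - x‖ ≤ ε' := by
      have := hseg hz
      rwa [Metric.mem_closedBall, dist_eq_norm] at this
    calc ‖fderiv ℝ φ z - L‖ ≤ α * ‖z - x‖ := h1
      _ ≤ α * ε' := by nlinarith
  rw [hnyx] at hmv
  have hLyx : L (y - x) = -(ε' * L v) := by
    rw [hyx, map_neg, map_smul]; simp
  have habs : -(α * ε' * ε') ≤ φ y - φ x - L (y - x) := (abs_le.mp (by rwa [← Real.norm_eq_abs])).1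
  rw [hLyx] at habs
  have hsq : ε' ^ 2 = ε' * ε' := sq ε'
  have key : -(ε' * L v) ≤ 3 * α / 2 * ε' ^ 2 + κ := by linarith
  have hεne : ε' ≠ 0 := ne_of_gt hε'
  have h1 : -(3 * α / 2 * ε' + κ / ε') * ε' ≤ L v * ε' := by
    have h2 : -(3 * α / 2 * ε' + κ / ε') * ε' = -(3 * α / 2 * ε' ^ 2 + κ) := by
      field_simp
    rw [h2]
    have h3 : ε' * L v = L v * ε' := mul_comm _ _
    linarith [key]
  exact le_of_mul_le_mul_right h1 hε'
end

section
/- Let n ≥ 1, let φ : ℝ^n → ℝ be differentiable with α-Lipschitz gradient (α > 0), let ε > 0, and set ε̄ = ε/(6nα) and κ = ε²/(24nα); assume ε̄ ≤ 1/2. Suppose x ∈ [0,1]^n satisfies: φ(x) ≥ φ(y) − (α/2)·ε̄² − κ for every y ∈ [0,1]^n with ‖y − x‖₂ ≤ ε̄. Define x̄ coordinatewise by: x̄_j = 0 if x_j < ε̄, x̄_j = 1 if x_j > 1−ε̄, and x̄_j = x_j otherwise. Then x̄ ∈ [0,1]^n and for every coordinate j: if x̄_j > 0 then ∂_j φ(x̄)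 ≥ −ε, and if x̄_j < 1 then ∂_j φ(x̄) ≤ ε. -/
theorem my_taylor {n : ℕ} (φ : EuclideanSpace ℝ (Fin n) → ℝ) (α : ℝ) (hα : 0 ≤ α)
    (hdiff : Differentiable ℝ φ)
    (hlipf : ∀ a b, ‖fderiv ℝ φ a - fderiv ℝ φ b‖ ≤ α * ‖a - b‖)
    (x y : EuclideanSpace ℝ (Fin n)) :
    |φ y - φ x - fderiv ℝ φ x (y - x)| ≤ α * ‖y - x‖ * ‖y - x‖ := by
  set L := fderiv ℝ φ x with hL
  have hdg : ∀ z ∈ Metric.closedBall x ‖y - x‖, DifferentiableAt ℝ (fun z => φ z - L z) z :=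
    fun z _ => (hdiff z).sub (L.differentiable z)
  have hbound : ∀ z ∈ Metric.closedBall x ‖y - x‖,
      ‖fderiv ℝ (fun z => φ z - L z) z‖ ≤ α * ‖y - x‖ := by
    intro z hz
    rw [fderiv_fun_sub (hdiff z) (L.differentiable z), L.fderiv]
    refine (hlipf z x).trans (mul_le_mul_of_nonneg_left ?_ hα)
    simpa [dist_eq_norm] using hz
  have hx : x ∈ Metric.closedBall x ‖y - x‖ := Metric.mem_closedBall_self (norm_nonneg _)
  have hy : y ∈ Metric.closedBall x ‖y - x‖ := by simp [Metric.mem_closedBall, dist_eq_norm]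
  have := (convex_closedBall x ‖y - x‖).norm_image_sub_le_of_norm_fderiv_le hdg hbound hx hy
  calc |φ y - φ x - L (y - x)| = ‖(φ y - L y) - (φ x - L x)‖ := by
        rw [map_sub]; congr 1; ring
    _ ≤ α * ‖y - x‖ * ‖y - x‖ := this

set_option maxHeartbeats 1000000 in
/-- Rounding a KKT solution with parameters `ε̄ = ε/(6nα)` and `κ = ε²/(24nα)` to the
boundary yields an `ε`-approximate fixed point of the gradient descent dynamics. -/
theorem gd_fixed_point_of_kkt_solution {n : ℕ} (hn : 1 ≤ n)
    (φ : EuclideanSpace ℝ (Fin n) → ℝ) (α : ℝ) (hα : 0 < α)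
    (hdiff : Differentiable ℝ φ)
    (hlip : ∀ x y, ‖gradient φ x - gradient φ y‖ ≤ α * ‖x - y‖)
    (ε : ℝ) (hε : 0 < ε)
    (hhalf : ε / (6 * n * α) ≤ 1 / 2)
    (x : EuclideanSpace ℝ (Fin n)) (hx : ∀ j, x j ∈ Set.Icc (0 : ℝ) 1)
    (hkkt : ∀ y : EuclideanSpace ℝ (Fin n), (∀ j, y j ∈ Set.Icc (0 : ℝ) 1) →
      ‖y - x‖ ≤ ε / (6 * n * α) →
      φ x ≥ φ y - α / 2 * (ε / (6 * n * α)) ^ 2 - ε ^ 2 / (24 * n * α))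
    (x' : EuclideanSpace ℝ (Fin n))
    (hx' : ∀ j, x' j =
      if x j < ε / (6 * n * α) then 0
      else if 1 - ε / (6 * n * α) < x j then 1 else x j) :
    (∀ j, x' j ∈ Set.Icc (0 : ℝ) 1) ∧
      ∀ j : Fin n,
        (0 < x' j → -ε ≤ fderiv ℝ φ x' (EuclideanSpace.single j 1)) ∧
          (x' j < 1 → fderiv ℝ φ x' (EuclideanSpace.single j 1) ≤ ε) := by
  have hN : (1:ℝ) ≤ (n:ℝ) := by exact_mod_cast hn
  have hN0 : (0:ℝ) < (n:ℝ) := by linarith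
  set b : ℝ := ε / (6 * n * α) with hbdef
  clear_value b
  have hb : 0 < b := by
    rw [hbdef]; positivity
  have hεb : ε = 6 * n * α * b := by
    rw [hbdef]; field_simp
  -- transfer Lipschitz to fderiv
  have hlipf : ∀ a c, ‖fderiv ℝ φ a - fderiv ℝ φ c‖ ≤ α * ‖a - c‖ := by
    intro a c
    have h := hlip a c
    rwa [gradient, gradient, ← LinearIsometryEquiv.map_sub,
      LinearIsometryEquiv.norm_map] at h
  -- membership
  have hmem : ∀ j, x' j ∈ Set.Icc (0:ℝ) 1 := by
    intro j
    rw [hx' j]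
    split_ifs with h1 h2
    · exact ⟨le_refl 0, zero_le_one⟩
    · exact ⟨zero_le_one, le_refl 1⟩
    · exact hx j
  refine ⟨hmem, fun j => ?_⟩
  -- coordinate distance
  have hdcoord : ∀ k : Fin n, |x' k - x k| ≤ b := by
    intro k
    rw [hx' k]
    have h0 := (hx k).1
    have h1 := (hx k).2
    split_ifs with ha hb2
    · rw [abs_le]; constructor <;> linarith [hbdef.le, hbdef.ge]
    · rw [abs_le]; constructor <;> linarith [hbdef.le, hbdef.ge]
    · simp [hb.le]
  -- norm distance
  have hnx' : ‖x' - x‖ ≤ Real.sqrt n * b := by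
    rw [EuclideanSpace.norm_eq]
    have hsum : (∑ i, ‖(x' - x) i‖ ^ 2) ≤ (n:ℝ) * b ^ 2 := by
      calc (∑ i, ‖(x' - x) i‖ ^ 2) ≤ ∑ _i : Fin n, b ^ 2 := by
            apply Finset.sum_le_sum
            intro i _
            have h : ‖(x' - x) i‖ ≤ b := by
              simpa [PiLp.sub_apply, Real.norm_eq_abs] using hdcoord i
            nlinarith [norm_nonneg ((x' - x) i)]
        _ = (n:ℝ) * b ^ 2 := by simp [Finset.sum_const]
    calc Real.sqrt (∑ i, ‖(x' - x) i‖ ^ 2) ≤ Real.sqrt ((n:ℝ) * b ^ 2) :=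
          Real.sqrt_le_sqrt hsum
      _ = Real.sqrt n * b := by
          rw [Real.sqrt_mul (le_of_lt hN0), Real.sqrt_sq hb.le]
  -- fderiv closeness per coordinate
  have hclose : |fderiv ℝ φ x' (EuclideanSpace.single j 1) -
      fderiv ℝ φ x (EuclideanSpace.single j 1)| ≤ ε / 6 := by
    have h1 : |(fderiv ℝ φ x' - fderiv ℝ φ x) (EuclideanSpace.single j 1)| ≤
        ‖fderiv ℝ φ x' - fderiv ℝ φ x‖ *
          ‖(EuclideanSpace.single j (1:ℝ) : EuclideanSpace ℝ (Fin n))‖ :=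
      (fderiv ℝ φ x' - fderiv ℝ φ x).le_opNorm _
    rw [EuclideanSpace.norm_single, norm_one, mul_one] at h1
    have h2 : ‖fderiv ℝ φ x' - fderiv ℝ φ x‖ ≤ α * (Real.sqrt n * b) :=
      (hlipf x' x).trans (mul_le_mul_of_nonneg_left hnx' hα.le)
    have hs : Real.sqrt n ≤ (n:ℝ) := by
      nlinarith [sq_nonneg (Real.sqrt (n:ℝ) - 1), Real.sq_sqrt hN0.le, hN]
    have h3 : α * (Real.sqrt n * b) ≤ α * ((n:ℝ) * b) :=
      mul_le_mul_of_nonneg_left (mul_le_mul_of_nonneg_right hs hb.le) hα.le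
    have h4 : α * ((n:ℝ) * b) = ε / 6 := by
      rw [hεb]; field_simp
    have h5 : (fderiv ℝ φ x' - fderiv ℝ φ x) (EuclideanSpace.single j 1) =
        fderiv ℝ φ x' (EuclideanSpace.single j 1) -
        fderiv ℝ φ x (EuclideanSpace.single j 1) := rfl
    rw [h5] at h1
    linarith
  set D := fderiv ℝ φ x (EuclideanSpace.single j (1:ℝ)) with hD
  clear_value D
  -- numeric bound
  have hκ : ε ^ 2 / (24 * n * α) = 3 / 2 * n * α * b ^ 2 := by
    rw [hεb]; field_simp; ring
  have hnum : α / 2 * b ^ 2 + ε ^ 2 / (24 * n * α) + α * b * b ≤ b * (ε / 2) := by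
    rw [hκ, hεb]
    nlinarith [mul_nonneg (mul_nonneg hα.le (sq_nonneg b)) (sub_nonneg.2 hN)]
  constructor
  · -- lower bound: 0 < x' j
    intro hj
    have hxj : b ≤ x j := by
      rw [hx' j] at hj
      split_ifs at hj with h1 h2
      · exact absurd hj (lt_irrefl 0)
      · linarith [hbdef.le, hbdef.ge, (hx j).2]
      · linarith [hbdef.le, hbdef.ge]
    set y : EuclideanSpace ℝ (Fin n) := x - b • EuclideanSpace.single j 1 with hy
    have hyx : y - x = -(b • EuclideanSpace.single j 1) := by rw [hy]; abel
    have hyxn : ‖y - x‖ = b := by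
      rw [hyx, norm_neg, norm_smul, EuclideanSpace.norm_single, norm_one, mul_one,
        Real.norm_eq_abs, abs_of_pos hb]
    have hymem : ∀ k, y k ∈ Set.Icc (0:ℝ) 1 := by
      intro k
      have h0 := (hx k).1
      have h1 := (hx k).2
      rw [hy, Set.mem_Icc]
      by_cases hkj : k = j
      · subst hkj
        simp only [PiLp.sub_apply, PiLp.smul_apply, EuclideanSpace.single_apply,
          smul_eq_mul, if_pos rfl, eq_self_iff_true, if_true, mul_one]
        constructor <;> linarith
      · simp only [PiLp.sub_apply, PiLp.smul_apply, EuclideanSpace.single_apply,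
          if_neg hkj, smul_eq_mul, mul_zero, sub_zero]
        exact hx k
    have hkkty := hkkt y hymem (le_of_eq hyxn)
    have htay := my_taylor φ α hα.le hdiff hlipf x y
    rw [hyxn] at htay
    have hfd : fderiv ℝ φ x (y - x) = -(b * D) := by
      rw [hyx, map_neg, map_smul, smul_eq_mul, hD]
    rw [hfd] at htay
    have habs := abs_le.1 htay
    have hDlow : -(b * D) ≤ b * (ε / 2) := by
      have h2 : -(b * D) ≤ φ y - φ x + α * b * b := by linarith [habs.1]
      linarith [hkkty, hnum]
    have hDge : -(ε / 2) ≤ D := by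
      have := (mul_le_mul_iff_right₀ hb).1 (show b * (-(ε/2)) ≤ b * D by linarith)
      linarith
    have hc := abs_le.1 hclose
    linarith [hc.1]
  · -- upper bound: x' j < 1
    intro hj
    have hxj : x j ≤ 1 - b := by
      rw [hx' j] at hj
      split_ifs at hj with h1 h2
      · linarith [hbdef.le, hbdef.ge, hhalf, (hx j).1]
      · exact absurd hj (lt_irrefl 1)
      · linarith [hbdef.le, hbdef.ge]
    set y : EuclideanSpace ℝ (Fin n) := x + b • EuclideanSpace.single j 1 with hy
    have hyx : y - x = b • EuclideanSpace.single j 1 := by rw [hy]; abel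
    have hyxn : ‖y - x‖ = b := by
      rw [hyx, norm_smul, EuclideanSpace.norm_single, norm_one, mul_one,
        Real.norm_eq_abs, abs_of_pos hb]
    have hymem : ∀ k, y k ∈ Set.Icc (0:ℝ) 1 := by
      intro k
      have h0 := (hx k).1
      have h1 := (hx k).2
      rw [hy, Set.mem_Icc]
      by_cases hkj : k = j
      · subst hkj
        simp only [PiLp.add_apply, PiLp.smul_apply, EuclideanSpace.single_apply,
          smul_eq_mul, if_pos rfl, eq_self_iff_true, if_true, mul_one]
        constructor <;> linarith
      · simp only [PiLp.add_apply, PiLp.smul_apply, EuclideanSpace.single_apply,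
          if_neg hkj, smul_eq_mul, mul_zero, add_zero]
        exact hx k
    have hkkty := hkkt y hymem (le_of_eq hyxn)
    have htay := my_taylor φ α hα.le hdiff hlipf x y
    rw [hyxn] at htay
    have hfd : fderiv ℝ φ x (y - x) = b * D := by
      rw [hyx, map_smul, smul_eq_mul, hD]
    rw [hfd] at htay
    have habs := abs_le.1 htay
    have hDhigh : b * D ≤ b * (ε / 2) := by
      have h2 : b * D ≤ φ y - φ x + α * b * b := by linarith [habs.2]
      linarith [hkkty, hnum]
    have hDle : D ≤ ε / 2 := (mul_le_mul_iff_right₀ hb).1 hDhigh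
    have hc := abs_le.1 hclose
    linarith [hc.2]
end

section
/- Let ε > 0 and h ≥ 7ε. Let y ∈ ℝ and let β₋₁, β₀, β₁ ∈ ℝ each be an integer multiple of h (i.e. for each i ∈ {−1,0,1} there is m_i ∈ ℤ with β_i = m_i·h). Then there exist indices i, i' ∈ {−1, 0, 1} with i ≠ i' such that |β_i − (y + i·ε)| ≥ |β_{i'} − (y + i'·ε)| + ε. -/
set_option maxHeartbeats 4000000 in
/-- Given three grid points `β_{−1}, β_0, β_1` of the grid `h·ℤ` with `h ≥ 7ε`, and shifts
`y + i·ε` for `i ∈ {−1,0,1}`, some shift is at distance at least `ε` larger from its grid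
point than another shift is from its own. -/
theorem exists_shift_pair_with_gap (ε h : ℝ) (hε : 0 < ε) (hh : 7 * ε ≤ h)
    (y : ℝ) (β : ℤ → ℝ)
    (hgrid : ∀ i : ℤ, i ∈ ({-1, 0, 1} : Set ℤ) → ∃ m : ℤ, β i = m * h) :
    ∃ i i' : ℤ, i ∈ ({-1, 0, 1} : Set ℤ) ∧ i' ∈ ({-1, 0, 1} : Set ℤ) ∧ i ≠ i' ∧
      |β i' - (y + (i' : ℝ) * ε)| + ε ≤ |β i - (y + (i : ℝ) * ε)| := by
  have hpos : (0:ℝ) < h := lt_of_lt_of_le (by linarith) hh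
  have hm1 : (-1:ℤ) ∈ ({-1, 0, 1} : Set ℤ) := by simp
  have h0 : (0:ℤ) ∈ ({-1, 0, 1} : Set ℤ) := by simp
  have h1 : (1:ℤ) ∈ ({-1, 0, 1} : Set ℤ) := by simp
  have pair : ∀ i j : ℤ, i ∈ ({-1, 0, 1} : Set ℤ) → j ∈ ({-1, 0, 1} : Set ℤ) →
      β i = β j ∨ h ≤ β i - β j ∨ β i - β j ≤ -h := by
    intro i j hi hj
    obtain ⟨m, hm⟩ := hgrid i hi
    obtain ⟨n, hn⟩ := hgrid j hj
    rcases lt_trichotomy m n with hmn | hmn | hmn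
    · right; right
      have : (m:ℝ) + 1 ≤ n := by exact_mod_cast hmn
      rw [hm, hn]; nlinarith
    · left; rw [hm, hn, hmn]
    · right; left
      have : (n:ℝ) + 1 ≤ m := by exact_mod_cast hmn
      rw [hm, hn]; nlinarith
  by_contra hcon
  push_neg at hcon
  have P10 := pair 1 0 h1 h0
  have P01 := pair 0 (-1) h0 hm1
  have P11 := pair 1 (-1) h1 hm1
  have c1 := hcon (-1) 0 hm1 h0 (by decide)
  have c2 := hcon 0 (-1) h0 hm1 (by decide)
  have c3 := hcon 0 1 h0 h1 (by decide)
  have c4 := hcon 1 0 h1 h0 (by decide)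
  have c5 := hcon (-1) 1 hm1 h1 (by decide)
  have c6 := hcon 1 (-1) h1 hm1 (by decide)
  push_cast at c1 c2 c3 c4 c5 c6
  rcases abs_cases (β (-1) - (y + (-1) * ε)) with ⟨e1, s1⟩ | ⟨e1, s1⟩ <;>
  rcases abs_cases (β 0 - (y + 0 * ε)) with ⟨e2, s2⟩ | ⟨e2, s2⟩ <;>
  rcases abs_cases (β 1 - (y + 1 * ε)) with ⟨e3, s3⟩ | ⟨e3, s3⟩ <;>
  rcases P10 with p1 | p1 | p1 <;>
  rcases P01 with p2 | p2 | p2 <;>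
  rcases P11 with p3 | p3 | p3 <;>
  linarith
end

section
/- Let n ≥ 1 and A : Fin n → ℕ with A i ≥ 1 for all i, and let U be a multilinear map from Π_{i} (Fin (A i) → ℝ) to ℝ. Let C ∈ ℝ and define φ(x) = −C·Σ_i (s_i(x) − 1)² + U(x), where s_i(x) = Σ_k x_{i,k}. Fix a block i₀ and an index k₀ ∈ Fin (A i₀), and fix x. Let d be the direction whose block i₀ equals s_{i₀}(x)·e_{k₀} − x_{i₀} (where e_{k₀} is the k₀-th standard basis vector of Fin (A i₀) → ℝ) and whose other blocks are zero. Then the derivative of φ at x in direction d equals s_{i₀}(x)·U(x with block i₀ replaced by e_{k₀}) − U(x). -/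
/-- The derivative of `φ(x) = −C·Σ_i (s_i(x) − 1)² + U(x)` at `x` in the direction whose
block `i₀` equals `s_{i₀}(x)·e_{k₀} − x_{i₀}` and whose other blocks vanish equals
`s_{i₀}(x)·U(x with block i₀ replaced by e_{k₀}) − U(x)`. -/
theorem fderiv_congestion_potential_deviation_direction {n : ℕ} (hn : 1 ≤ n)
    (A : Fin n → ℕ) (hA : ∀ i, 1 ≤ A i)
    (U : MultilinearMap ℝ (fun i : Fin n => Fin (A i) → ℝ) ℝ) (C : ℝ)
    (x : ∀ i : Fin n, Fin (A i) → ℝ) (i₀ : Fin n) (k₀ : Fin (A i₀)) :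
    fderiv ℝ (fun y : ∀ i : Fin n, Fin (A i) → ℝ =>
        -C * ∑ i', (∑ k', y i' k' - 1) ^ 2 + U y) x
      (Pi.single i₀ ((∑ k', x i₀ k') • (Pi.single k₀ 1 : Fin (A i₀) → ℝ) - x i₀))
    = (∑ k', x i₀ k') * U (Function.update x i₀ (Pi.single k₀ 1)) - U x := by
  classical
  -- U is continuous since it is a polynomial in coordinates
  have hUeq : ⇑U = fun y : ∀ i : Fin n, Fin (A i) → ℝ =>
      ∑ r : ∀ i : Fin n, Fin (A i),
        (∏ i, y i (r i)) * U (fun i => Pi.single (r i) 1) := by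
    funext y
    have hy : y = fun i => ∑ k, y i k • (Pi.single k 1 : Fin (A i) → ℝ) := by
      funext i
      simp [← Pi.single_smul', Finset.univ_sum_single]
    conv_lhs => rw [hy]
    rw [U.map_sum]
    refine Finset.sum_congr rfl fun r _ => ?_
    rw [U.map_smul_univ]
    simp [smul_eq_mul]
  have hUcont : Continuous ⇑U := by
    rw [hUeq]
    refine continuous_finset_sum _ fun r _ => Continuous.mul ?_ continuous_const
    exact continuous_finset_prod _ fun i _ =>
      (continuous_apply (r i)).comp (continuous_apply i)
  set V : ContinuousMultilinearMap ℝ (fun i : Fin n => Fin (A i) → ℝ) ℝ :=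
    ⟨U, hUcont⟩ with hV
  -- sum-in-block-i linear functional
  set S : ∀ i : Fin n, ((∀ j : Fin n, Fin (A j) → ℝ) →L[ℝ] ℝ) := fun i =>
    ∑ k : Fin (A i), (ContinuousLinearMap.proj k).comp
      (ContinuousLinearMap.proj (R := ℝ) (φ := fun j : Fin n => Fin (A j) → ℝ) i) with hS
  have hSapp : ∀ (i : Fin n) (y : ∀ j : Fin n, Fin (A j) → ℝ), S i y = ∑ k, y i k := by
    intro i y
    simp [hS]
  -- derivative of quadratic part
  have hquad : HasFDerivAt
      (fun y : ∀ i : Fin n, Fin (A i) → ℝ => -C * ∑ i', (∑ k', y i' k' - 1) ^ 2)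
      ((-C) • ∑ i' : Fin n, ((2 * (S i' x - 1)) • S i')) x := by
    refine HasFDerivAt.const_mul ?_ (-C)
    have : ∀ i' : Fin n,
        HasFDerivAt (fun y : ∀ i : Fin n, Fin (A i) → ℝ => (∑ k', y i' k' - 1) ^ 2)
          ((2 * (S i' x - 1)) • S i') x := by
      intro i'
      have h1 : HasFDerivAt (fun y : ∀ i : Fin n, Fin (A i) → ℝ => S i' y - 1)
          (S i') x := ((S i').hasFDerivAt).sub_const 1
      have h2 := h1.fun_mul h1
      simpa [hSapp, pow_two, two_mul, add_smul] using h2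
    have := HasFDerivAt.fun_sum (fun i' (_ : i' ∈ Finset.univ) => this i')
    simpa using this
  have hU' : HasFDerivAt (fun y : ∀ i : Fin n, Fin (A i) → ℝ => U y)
      (V.linearDeriv x) x := V.hasFDerivAt x
  have htot := hquad.fun_add hU'
  rw [htot.fderiv]
  set d := (Pi.single i₀ ((∑ k', x i₀ k') • (Pi.single k₀ 1 : Fin (A i₀) → ℝ) - x i₀) :
    ∀ i : Fin n, Fin (A i) → ℝ) with hd
  have hdi : ∀ i : Fin n, i ≠ i₀ → d i = 0 := by
    intro i hi; simp [hd, Pi.single_eq_of_ne hi]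
  -- quadratic part vanishes on d
  have hSd : ∀ i : Fin n, S i d = 0 := by
    intro i
    rcases eq_or_ne i i₀ with rfl | hi
    · rw [hSapp]
      simp [hd, Finset.mul_sum, Pi.single_apply, Finset.sum_sub_distrib]
    · rw [hSapp, hdi i hi]; simp
  have hquadd : ((-C) • ∑ i' : Fin n, ((2 * (S i' x - 1)) • S i')) d = 0 := by
    simp [ContinuousLinearMap.sum_apply, hSd]
  simp only [ContinuousLinearMap.add_apply, hquadd, zero_add]
  rw [V.linearDeriv_apply]
  have hterm : ∀ i : Fin n, i ≠ i₀ → V (Function.update x i (d i)) = 0 := by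
    intro i hi
    rw [hdi i hi]
    exact V.map_update_zero x i
  rw [Finset.sum_eq_single i₀ (fun i _ hi => hterm i hi) (by simp)]
  have hdi₀ : d i₀ = (∑ k', x i₀ k') • (Pi.single k₀ 1 : Fin (A i₀) → ℝ) - x i₀ := by
    simp [hd]
  rw [hdi₀]
  show (U (Function.update x i₀ ((∑ k', x i₀ k') • (Pi.single k₀ 1 : Fin (A i₀) → ℝ) - x i₀)) : ℝ) = _
  rw [U.map_update_sub x i₀, U.map_update_smul x i₀, Function.update_eq_self]
  simp [smul_eq_mul]
end

section
/- Let n ≥ 1 and A : Fin n → ℕ with A i ≥ 1 for all i, let U be a multilinear map from Π_{i} (Fin (A i) → ℝ) to ℝ, and let M > 0 satisfy |U(z)| ≤ M for every z all of whose entries lie in [0,2]. Set C = 4M and φ(x) = −C·Σ_i (s_i(x) − 1)² + U(x), where s_i(x) = Σ_k x_{i,k}. Let ε_N > 0, set ε = ε_N·2^{−n}/3, and assume ε ≤ M. Suppose x, with all entries in [0,2], satisfies: for every block i and index k, if x_{i,k} > 0 then ∂_{(i,k)}φ(x) ≥ −ε, and if x_{i,k} < 2 then ∂_{(i,k)}φ(x)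 ≤ ε. Then 1/2 ≤ s_i(x) ≤ 3/2 for every i, and the normalized profile σ defined blockwise by σ_i = s_i(x)^{−1}·x_i satisfies, for every block i and every index k ∈ Fin (A i): U(σ) ≥ U(σ with block i replaced by the k-th standard basis vector of Fin (A i) → ℝ) − ε_N. -/
section aux
variable {n : ℕ} {A : Fin n → ℕ}

lemma aux_norm_bound (U : MultilinearMap ℝ (fun i : Fin n => Fin (A i) → ℝ) ℝ)
    (y : ∀ i : Fin n, Fin (A i) → ℝ) :
    ‖U y‖ ≤ (∑ m : ∀ i : Fin n, Fin (A i),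
        ‖U (fun i => (Pi.single (m i) 1 : Fin (A i) → ℝ))‖) * ∏ i, ‖y i‖ := by
  have hy : U y = ∑ m : ∀ i : Fin n, Fin (A i),
      (∏ i, y i (m i)) • U (fun i => (Pi.single (m i) 1 : Fin (A i) → ℝ)) := by
    have h1 : (U fun i => ∑ k, y i k • (Pi.single k 1 : Fin (A i) → ℝ)) =
        ∑ m : ∀ i : Fin n, Fin (A i),
          U fun i => y i (m i) • (Pi.single (m i) 1 : Fin (A i) → ℝ) :=
      U.map_sum (g := fun i k => y i k • (Pi.single k 1 : Fin (A i) → ℝ))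
    have h2 : ∀ i, (∑ k, y i k • (Pi.single k 1 : Fin (A i) → ℝ)) = y i := by
      intro i
      have h3 : ∀ k : Fin (A i), y i k • (Pi.single k 1 : Fin (A i) → ℝ)
          = Pi.single k (y i k) := by
        intro k; ext l; simp [Pi.single_apply, mul_ite]
      simp only [h3, Finset.univ_sum_single]
    calc U y = U fun i => ∑ k, y i k • (Pi.single k 1 : Fin (A i) → ℝ) :=
          congrArg (⇑U) (funext h2).symm
      _ = ∑ m : ∀ i : Fin n, Fin (A i),
            U fun i => y i (m i) • (Pi.single (m i) 1 : Fin (A i) → ℝ) := h1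
      _ = ∑ m : ∀ i : Fin n, Fin (A i),
            (∏ i, y i (m i)) • U (fun i => (Pi.single (m i) 1 : Fin (A i) → ℝ)) :=
          Finset.sum_congr rfl fun m _ => U.map_smul_univ _ _
  rw [hy]
  refine (norm_sum_le _ _).trans ?_
  rw [Finset.sum_mul]
  refine Finset.sum_le_sum fun m _ => ?_
  rw [norm_smul, mul_comm]
  gcongr
  rw [Real.norm_eq_abs, Finset.abs_prod]
  refine Finset.prod_le_prod (fun i _ => abs_nonneg _) fun i _ => ?_
  exact norm_le_pi_norm (y i) (m i)




lemma aux_fderiv (U : MultilinearMap ℝ (fun i : Fin n => Fin (A i) → ℝ) ℝ)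
    (C0 : ℝ) (hC0 : ∀ y, ‖U y‖ ≤ C0 * ∏ i, ‖y i‖)
    (M : ℝ) (x : ∀ i : Fin n, Fin (A i) → ℝ) (i : Fin n) (k : Fin (A i)) :
    fderiv ℝ (fun y : ∀ i : Fin n, Fin (A i) → ℝ =>
        -(4 * M) * ∑ i', (∑ k', y i' k' - 1) ^ 2 + U y) x
      (Pi.single i (Pi.single k 1))
    = -(8 * M) * (∑ k', x i k' - 1) + U (Function.update x i (Pi.single k 1)) := by
  classical
  let E := ∀ i : Fin n, Fin (A i) → ℝ
  set U' : ContinuousMultilinearMap ℝ (fun i : Fin n => Fin (A i) → ℝ) ℝ :=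
    U.mkContinuous C0 hC0 with hU'def
  have hU'coe : ∀ y : E, U' y = U y := fun y => rfl
  -- linear functionals: block sums
  set ℓ : ∀ i' : Fin n, E →L[ℝ] ℝ := fun i' =>
    (∑ k' : Fin (A i'), ContinuousLinearMap.proj k').comp
      (ContinuousLinearMap.proj (R := ℝ) (φ := fun i : Fin n => Fin (A i) → ℝ) i') with hℓdef
  have hℓ : ∀ (i' : Fin n) (y : E), ℓ i' y = ∑ k', y i' k' := by
    intro i' y
    simp only [hℓdef, ContinuousLinearMap.coe_comp', Function.comp_apply,
      ContinuousLinearMap.coe_sum', Finset.sum_apply]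
    exact Finset.sum_congr rfl fun k' _ => rfl
  -- derivative of the quadratic part
  have hquad : ∀ i' : Fin n,
      HasFDerivAt (fun y : E => (∑ k', y i' k' - 1) ^ 2)
        ((2 * (∑ k', x i' k' - 1)) • (ℓ i' : E →L[ℝ] ℝ)) x := by
    intro i'
    have h1 : HasFDerivAt (fun y : E => ℓ i' y - 1) (ℓ i') x :=
      (ℓ i').hasFDerivAt.sub_const 1
    have h2 : HasDerivAt (fun t : ℝ => t ^ 2) (2 * (ℓ i' x - 1)) (ℓ i' x - 1) := by
      simpa using (hasDerivAt_pow 2 (ℓ i' x - 1))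
    have := h2.comp_hasFDerivAt x h1
    simp only [hℓ] at this
    exact this
  have hsum : HasFDerivAt (fun y : E => ∑ i', (∑ k', y i' k' - 1) ^ 2)
      (∑ i', (2 * (∑ k', x i' k' - 1)) • (ℓ i' : E →L[ℝ] ℝ)) x :=
    HasFDerivAt.fun_sum fun i' _ => hquad i'
  have hU : HasFDerivAt (fun y : E => U y) (U'.linearDeriv x) x := by
    have := U'.hasFDerivAt (x := x)
    exact this
  have htot : HasFDerivAt (fun y : E =>
      -(4 * M) * ∑ i', (∑ k', y i' k' - 1) ^ 2 + U y)
      ((-(4 * M)) • (∑ i', (2 * (∑ k', x i' k' - 1)) • (ℓ i' : E →L[ℝ] ℝ))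
        + U'.linearDeriv x) x := by
    exact (hsum.const_mul (-(4 * M))).add hU
  rw [htot.fderiv]
  -- now evaluate at the single vector
  have hv : ∀ i' : Fin n, (Pi.single i (Pi.single k 1) : E) i'
      = if h : i' = i then h ▸ (Pi.single k 1 : Fin (A i) → ℝ) else 0 := by
    intro i'
    by_cases h : i' = i
    · subst h; simp
    · rw [dif_neg h, Pi.single_eq_of_ne h]
  simp only [ContinuousLinearMap.add_apply, ContinuousLinearMap.smul_apply,
    ContinuousLinearMap.coe_sum', Finset.sum_apply, ContinuousMultilinearMap.linearDeriv_apply]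
  have hℓv : ∀ i' : Fin n, ℓ i' (Pi.single i (Pi.single k 1)) = if i' = i then 1 else 0 := by
    intro i'
    rw [hℓ]
    by_cases h : i' = i
    · subst h
      simp [Pi.single_apply, Finset.sum_ite_eq']
    · simp [Pi.single_eq_of_ne h, if_neg h]
  have hquadeval : (∑ i' : Fin n, (2 * (∑ k' : Fin (A i'), x i' k' - 1)) •
      (ℓ i') (Pi.single i (Pi.single k 1))) = 2 * (∑ k' : Fin (A i), x i k' - 1) := by
    rw [Finset.sum_eq_single i]
    · simp [hℓv]
    · intro b _ hb
      simp [hℓv, hb]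
    · simp
  have hlineval : (∑ i', U' (Function.update x i' ((Pi.single i (Pi.single k 1) : E) i')))
      = U (Function.update x i (Pi.single k 1)) := by
    rw [Finset.sum_eq_single i]
    · rw [hv]
      simp [hU'coe]
    · intro b _ hb
      rw [hv]
      simp only [dif_neg hb]
      exact U'.map_update_zero x b
    · simp
  rw [hquadeval, hlineval, smul_eq_mul]
  ring

end aux


/-- If `x ∈ [0,2]^A` is an `ε`-approximate gradient descent fixed point of
`φ(x) = −4M·Σ_i (s_i(x) − 1)² + U(x)` with `ε = ε_N·2^{−n}/3 ≤ M`, then each block sum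
`s_i(x)` lies in `[1/2, 3/2]` and the normalized profile `σ_i = s_i(x)⁻¹·x_i` is an
`ε_N`-approximate Nash equilibrium of the identical-interest game with utility `U`. -/
theorem approx_nash_of_gd_fixed_point {n : ℕ} (hn : 1 ≤ n)
    (A : Fin n → ℕ) (hA : ∀ i, 1 ≤ A i)
    (U : MultilinearMap ℝ (fun i : Fin n => Fin (A i) → ℝ) ℝ)
    (M : ℝ) (hM : 0 < M)
    (hbound : ∀ z : ∀ i : Fin n, Fin (A i) → ℝ,
      (∀ i k, z i k ∈ Set.Icc (0 : ℝ) 2) → |U z| ≤ M)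
    (εN : ℝ) (hεN : 0 < εN) (hεM : εN * (2 : ℝ) ^ (-(n : ℤ)) / 3 ≤ M)
    (x : ∀ i : Fin n, Fin (A i) → ℝ) (hx : ∀ i k, x i k ∈ Set.Icc (0 : ℝ) 2)
    (hfix : ∀ (i : Fin n) (k : Fin (A i)),
      (0 < x i k →
        -(εN * (2 : ℝ) ^ (-(n : ℤ)) / 3) ≤
          fderiv ℝ (fun y : ∀ i : Fin n, Fin (A i) → ℝ =>
              -(4 * M) * ∑ i', (∑ k', y i' k' - 1) ^ 2 + U y) x
            (Pi.single i (Pi.single k 1))) ∧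
      (x i k < 2 →
        fderiv ℝ (fun y : ∀ i : Fin n, Fin (A i) → ℝ =>
            -(4 * M) * ∑ i', (∑ k', y i' k' - 1) ^ 2 + U y) x
          (Pi.single i (Pi.single k 1)) ≤ εN * (2 : ℝ) ^ (-(n : ℤ)) / 3)) :
    (∀ i : Fin n, 1 / 2 ≤ ∑ k, x i k ∧ ∑ k, x i k ≤ 3 / 2) ∧
      ∀ (i : Fin n) (k : Fin (A i)),
        U (Function.update (fun i' => (∑ k', x i' k')⁻¹ • x i') i (Pi.single k 1))
          - εN ≤ U (fun i' => (∑ k', x i' k')⁻¹ • x i') := by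
  classical
  set ε := εN * (2 : ℝ) ^ (-(n : ℤ)) / 3 with hεdef
  have hεpos : 0 < ε := by positivity
  set s : Fin n → ℝ := fun i => ∑ k, x i k with hsdef
  set g : ∀ i : Fin n, Fin (A i) → ℝ :=
    fun i k => U (Function.update x i (Pi.single k 1)) with hgdef
  -- bound on g
  have hg : ∀ i k, |g i k| ≤ M := by
    intro i k
    refine hbound _ fun j l => ?_
    by_cases hj : j = i
    · subst hj
      rw [Function.update_self]
      by_cases hl : l = k
      · subst hl; simp
      · rw [Pi.single_eq_of_ne hl]; constructor <;> norm_num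
    · rw [Function.update_of_ne hj]; exact hx j l
  -- derivative formula
  have hD : ∀ (i : Fin n) (k : Fin (A i)),
      fderiv ℝ (fun y : ∀ i : Fin n, Fin (A i) → ℝ =>
          -(4 * M) * ∑ i', (∑ k', y i' k' - 1) ^ 2 + U y) x
        (Pi.single i (Pi.single k 1)) = -(8 * M) * (s i - 1) + g i k :=
    fun i k => aux_fderiv U _ (aux_norm_bound U) M x i k
  have hup : ∀ i k, x i k < 2 → g i k ≤ 8 * M * (s i - 1) + ε := by
    intro i k hk
    have := (hfix i k).2 hk
    rw [hD] at this
    linarith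
  have hlow : ∀ i k, 0 < x i k → 8 * M * (s i - 1) - ε ≤ g i k := by
    intro i k hk
    have := (hfix i k).1 hk
    rw [hD] at this
    linarith
  clear hfix hD hbound
  have hxnn : ∀ i k, 0 ≤ x i k := fun i k => (hx i k).1
  have hxk_le_s : ∀ i k, x i k ≤ s i := by
    intro i k
    exact Finset.single_le_sum (fun l _ => hxnn i l) (Finset.mem_univ k)
  -- lower bound on s
  have hs_ge : ∀ i, 3 / 4 ≤ s i := by
    intro i
    by_contra h
    push_neg at h
    set k₀ : Fin (A i) := ⟨0, hA i⟩
    have hk2 : x i k₀ < 2 := lt_of_le_of_lt (hxk_le_s i k₀) (by linarith)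
    have h1 := hup i k₀ hk2
    have h2 := abs_le.mp (hg i k₀)
    nlinarith only [h1, h2.1, hεM, hεpos, hM, h]
  have hs_pos : ∀ i, 0 < s i := fun i => lt_of_lt_of_le (by norm_num) (hs_ge i)
  -- upper bound on s
  have hs_le : ∀ i, s i ≤ 5 / 4 := by
    intro i
    have hex : ∃ k, 0 < x i k := by
      by_contra h
      push_neg at h
      have : s i = 0 := Finset.sum_eq_zero fun k _ => le_antisymm (h k) (hxnn i k)
      linarith [hs_pos i]
    obtain ⟨k, hk⟩ := hex
    have h1 := hlow i k hk
    have h2 := abs_le.mp (hg i k)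
    nlinarith only [h1, h2.2, hεM, hεpos, hM]
  have hx_lt2 : ∀ i k, x i k < 2 :=
    fun i k => lt_of_le_of_lt (le_trans (hxk_le_s i k) (hs_le i)) (by norm_num)
  have hup' : ∀ i k, g i k ≤ 8 * M * (s i - 1) + ε := fun i k => hup i k (hx_lt2 i k)
  -- expansion of U x in block i
  have hUx : ∀ i, U x = ∑ k, x i k * g i k := by
    intro i
    have h0 : x = Function.update x i (x i) := (Function.update_eq_self i x).symm
    have h1 : x i = ∑ k, x i k • (Pi.single k 1 : Fin (A i) → ℝ) := by
      have h3 : ∀ k : Fin (A i), x i k • (Pi.single k 1 : Fin (A i) → ℝ)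
          = Pi.single k (x i k) := by
        intro k; ext l; simp [Pi.single_apply, mul_ite]
      simp only [h3, Finset.univ_sum_single]
    calc U x = U (Function.update x i (∑ k, x i k • (Pi.single k 1 : Fin (A i) → ℝ))) := by
          rw [← h1, ← h0]
      _ = ∑ k, U (Function.update x i (x i k • (Pi.single k 1 : Fin (A i) → ℝ))) :=
          U.map_update_sum Finset.univ i _ x
      _ = ∑ k, x i k * g i k := by
          refine Finset.sum_congr rfl fun k _ => ?_
          rw [U.map_update_smul x i (x i k) (Pi.single k 1), smul_eq_mul]
  have hUx_ge : ∀ i, s i * (8 * M * (s i - 1) - ε) ≤ U x := by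
    intro i
    rw [hUx i, hsdef]
    simp only
    rw [Finset.sum_mul]
    refine Finset.sum_le_sum fun k _ => ?_
    rcases eq_or_lt_of_le (hxnn i k) with h | h
    · rw [← h]; ring_nf; rfl
    · have h2 := hlow i k h
      nlinarith only [h2, h, mul_le_mul_of_nonneg_left h2 (le_of_lt h)]
  refine ⟨fun i => ⟨by linarith [hs_ge i], by linarith [hs_le i]⟩, ?_⟩
  intro i k
  set P : ℝ := ∏ j, (s j)⁻¹ with hPdef
  have hP_pos : 0 < P := Finset.prod_pos fun j _ => inv_pos.mpr (hs_pos j)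
  have hP_le : P ≤ 2 ^ n := by
    calc P ≤ ∏ _j : Fin n, (2:ℝ) :=
          Finset.prod_le_prod (fun j _ => le_of_lt (inv_pos.mpr (hs_pos j)))
            (fun j _ => by
              rw [inv_le_comm₀ (hs_pos j) (by norm_num)]
              linarith [hs_ge j])
      _ = 2 ^ n := by simp
  have hε2n : (2:ℝ) ^ n * ε = εN / 3 := by
    rw [hεdef]
    have : (2:ℝ) ^ n * (2:ℝ) ^ (-(n:ℤ)) = 1 := by
      rw [← zpow_natCast (2:ℝ) n, ← zpow_add₀ (by norm_num : (2:ℝ) ≠ 0)]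
      simp
    calc (2:ℝ) ^ n * (εN * (2:ℝ) ^ (-(n:ℤ)) / 3)
        = εN * ((2:ℝ) ^ n * (2:ℝ) ^ (-(n:ℤ))) / 3 := by ring
      _ = εN / 3 := by rw [this, mul_one]
  have hUσ : U (fun i' => (∑ k', x i' k')⁻¹ • x i') = P * U x := by
    rw [U.map_smul_univ, smul_eq_mul, hPdef]
  have hUdev : U (Function.update (fun i' => (∑ k', x i' k')⁻¹ • x i') i
      (Pi.single k 1)) = (P * s i) * g i k := by
    have hfun : Function.update (fun i' => (∑ k', x i' k')⁻¹ • x i') i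
        (Pi.single k 1) = fun j => (Function.update (fun j' => (s j')⁻¹) i 1 j) •
          (Function.update x i (Pi.single k 1) j) := by
      funext j
      by_cases hj : j = i
      · subst hj; simp
      · rw [Function.update_of_ne hj, Function.update_of_ne hj,
          Function.update_of_ne hj]
    rw [hfun, U.map_smul_univ, smul_eq_mul]
    have hprod : (∏ j, Function.update (fun j' => (s j')⁻¹) i 1 j) = P * s i := by
      rw [Finset.prod_update_of_mem (Finset.mem_univ i), one_mul, hPdef,
        ← Finset.mul_prod_erase Finset.univ (fun j => (s j)⁻¹) (Finset.mem_univ i),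
        mul_comm ((s i)⁻¹) _, mul_assoc, inv_mul_cancel₀ (ne_of_gt (hs_pos i)), mul_one,
        Finset.sdiff_singleton_eq_erase]
    rw [hprod]
  rw [hUσ, hUdev]
  -- final inequality
  have h1 : s i * g i k ≤ U x + 2 * s i * ε := by
    nlinarith only [hup' i k, hUx_ge i, hs_pos i,
      mul_le_mul_of_nonneg_left (hup' i k) (le_of_lt (hs_pos i))]
  have h3 : P * s i * g i k - P * U x ≤ P * (2 * s i * ε) := by
    nlinarith only [mul_le_mul_of_nonneg_left h1 (le_of_lt hP_pos)]
  have h4 : P * (2 * s i * ε) ≤ εN := by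
    have h5 : (0:ℝ) ≤ 2 * s i * ε :=
      le_of_lt (mul_pos (mul_pos two_pos (hs_pos i)) hεpos)
    have h6 : 2 * s i * ε ≤ 2 * (5/4) * ε :=
      mul_le_mul_of_nonneg_right (by nlinarith only [hs_le i]) (le_of_lt hεpos)
    have h7 : P * (2 * s i * ε) ≤ 2 ^ n * (2 * (5/4) * ε) := by
      calc P * (2 * s i * ε) ≤ 2 ^ n * (2 * s i * ε) :=
            mul_le_mul_of_nonneg_right hP_le h5
        _ ≤ 2 ^ n * (2 * (5/4) * ε) :=
            mul_le_mul_of_nonneg_left h6 (by positivity)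
    nlinarith only [h7, hε2n, hεN]
  linarith only [h3, h4]
end
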